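/- Let ν > 0 and α, β ∈ ℝ be constants with (α − β)² = 4, and set λ = (α + β)/2. Let u₀, B₀ : ℝ³ → ℝ³ be three times continuously differentiable with div u₀ = 0, div B₀ = 0, B₀ + curl u₀ = α u₀, and u₀ − curl B₀ = −β B₀. Define u(t, x) = e^{−ν λ² t} u₀(x) − 2 ν λ t e^{−ν λ² t} (curl u₀(x) − λ u₀(x)) and B(t, x) = e^{−ν λ² t} B₀(x) − 2 ν λ t e^{−ν λ² t} (curl B₀(x) − λ B₀(x)). Then (u, B), with constant pressure, solves the viscous resistive Hall MHD equations with ν = η pointwise on [0, ∞) × ℝ³: ∂ₜu + (curl u) × u − ν Δu = (curl B) × B, ∂ₜB + curl(B × u) + curl((curl B) × B) − ν ΔB = 0, and div u = div B = 0, where all spatial operators act in x. -/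

import Mathlib

noncomputable section

open Real MeasureTheory

/-- ℝ³ as coordinate functions. -/
abbrev V3 : Type := Fin 3 → ℝ

/-- Partial derivative in the `i`-th coordinate direction. -/
noncomputable def pd (i : Fin 3) (f : V3 → ℝ) (x : V3) : ℝ :=
  fderiv ℝ f x (Pi.single i 1)

/-- Curl of a vector field on ℝ³:
`curl v = (∂₂v₃ − ∂₃v₂, ∂₃v₁ − ∂₁v₃, ∂₁v₂ − ∂₂v₁)`. -/
noncomputable def curl (v : V3 → V3) (x : V3) : V3 :=
  ![pd 1 (fun y => v y 2) x - pd 2 (fun y => v y 1) x,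
    pd 2 (fun y => v y 0) x - pd 0 (fun y => v y 2) x,
    pd 0 (fun y => v y 1) x - pd 1 (fun y => v y 0) x]

/-- Divergence of a vector field on ℝ³. -/
noncomputable def div3 (v : V3 → V3) (x : V3) : ℝ :=
  pd 0 (fun y => v y 0) x + pd 1 (fun y => v y 1) x + pd 2 (fun y => v y 2) x

/-- Gradient of a scalar function on ℝ³. -/
noncomputable def grad (f : V3 → ℝ) (x : V3) : V3 :=
  ![pd 0 f x, pd 1 f x, pd 2 f x]

/-- Cross product on ℝ³. -/
def cross (a b : V3) : V3 :=
  ![a 1 * b 2 - a 2 * b 1, a 2 * b 0 - a 0 * b 2, a 0 * b 1 - a 1 * b 0]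

/-- Componentwise Laplacian of a vector field. -/
noncomputable def lap (v : V3 → V3) (x : V3) : V3 :=
  fun j => ∑ i : Fin 3, pd i (fun y => pd i (fun z => v z j) y) x

/-- Advection term `((u·∇)w)_j = Σ_i u_i ∂_i w_j`. -/
noncomputable def adv (u w : V3 → V3) (x : V3) : V3 :=
  fun j => ∑ i : Fin 3, u x i * pd i (fun y => w y j) x

/-- Time derivative of a time-dependent vector field. -/
noncomputable def dt (u : ℝ → V3 → V3) (t : ℝ) (x : V3) : V3 :=
  fun j => deriv (fun s => u s x j) t

/-! ### Auxiliary lemmas -/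

lemma pd_add {f g : V3 → ℝ} {x : V3} (i : Fin 3) (hf : DifferentiableAt ℝ f x)
    (hg : DifferentiableAt ℝ g x) :
    pd i (fun y => f y + g y) x = pd i f x + pd i g x := by
  unfold pd; rw [fderiv_fun_add hf hg]; simp

lemma pd_sub {f g : V3 → ℝ} {x : V3} (i : Fin 3) (hf : DifferentiableAt ℝ f x)
    (hg : DifferentiableAt ℝ g x) :
    pd i (fun y => f y - g y) x = pd i f x - pd i g x := by
  unfold pd; rw [fderiv_fun_sub hf hg]; simp

lemma pd_const_mul {f : V3 → ℝ} {x : V3} (i : Fin 3) (c : ℝ) (hf : DifferentiableAt ℝ f x) :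
    pd i (fun y => c * f y) x = c * pd i f x := by
  unfold pd; rw [fderiv_const_mul hf]; simp

lemma pd_comb {f g : V3 → ℝ} {x : V3} (i : Fin 3) (p q : ℝ) (hf : DifferentiableAt ℝ f x)
    (hg : DifferentiableAt ℝ g x) :
    pd i (fun y => p * f y + q * g y) x = p * pd i f x + q * pd i g x := by
  rw [pd_add i (hf.const_mul p) (hg.const_mul q), pd_const_mul i p hf, pd_const_mul i q hg]

lemma pd_neg {f : V3 → ℝ} {x : V3} (i : Fin 3) :
    pd i (fun y => -f y) x = -pd i f x := by
  unfold pd; rw [fderiv_fun_neg]; simp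

lemma pd_const {x : V3} (i : Fin 3) (c : ℝ) : pd i (fun _ => c) x = 0 := by
  unfold pd; rw [fderiv_fun_const]; simp

lemma contDiff_pd {f : V3 → ℝ} (hf : ContDiff ℝ 3 f) (i : Fin 3) :
    ContDiff ℝ 2 (pd i f) := by
  have h1 : ContDiff ℝ 2 (fderiv ℝ f) := hf.fderiv_right (by norm_num)
  exact (ContinuousLinearMap.apply ℝ ℝ (Pi.single i 1)).contDiff.comp h1

lemma pd_pd_symm {f : V3 → ℝ} (hf : ContDiff ℝ 2 f) (i j : Fin 3) (x : V3) :
    pd i (pd j f) x = pd j (pd i f) x := by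
  have hd : DifferentiableAt ℝ (fderiv ℝ f) x :=
    ((hf.fderiv_right (m := 1) (by norm_num)).differentiable (by norm_num)) x
  have key : ∀ k l : Fin 3, pd k (pd l f) x
      = fderiv ℝ (fderiv ℝ f) x (Pi.single k 1) (Pi.single l 1) := by
    intro k l
    show fderiv ℝ (fun y => fderiv ℝ f y (Pi.single l 1)) x (Pi.single k 1) = _
    rw [fderiv_clm_apply hd (differentiableAt_const _)]
    simp
  rw [key i j, key j i]
  exact (hf.contDiffAt.isSymmSndFDerivAt (by simp [minSmoothness_of_isRCLikeNormedField])) _ _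

lemma comp_contDiff {v : V3 → V3} (hv : ContDiff ℝ 3 v) (j : Fin 3) :
    ContDiff ℝ 3 (fun y => v y j) := (contDiff_pi.1 hv) j

lemma curl_comb {v w : V3 → V3} (hv : ContDiff ℝ 3 v) (hw : ContDiff ℝ 3 w)
    (p q : ℝ) (x : V3) :
    curl (fun y => p • v y + q • w y) x = p • curl v x + q • curl w x := by
  have hv' : ∀ (j : Fin 3) (y : V3), DifferentiableAt ℝ (fun z => v z j) y :=
    fun j y => ((comp_contDiff hv j).differentiable (by norm_num)) y
  have hw' : ∀ (j : Fin 3) (y : V3), DifferentiableAt ℝ (fun z => w z j) y :=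
    fun j y => ((comp_contDiff hw j).differentiable (by norm_num)) y
  have hc : ∀ (j : Fin 3),
      (fun y => (p • v y + q • w y) j) = fun y => p * v y j + q * w y j := by
    intro j; funext y; simp
  funext j
  fin_cases j <;>
    simp [curl, hc, pd_comb _ p q (hv' _ _) (hw' _ _)] <;> ring

lemma curl_neg (v : V3 → V3) (x : V3) :
    curl (fun y => -(v y)) x = -(curl v x) := by
  have hc : ∀ (j : Fin 3), (fun y => (-(v y)) j) = fun y => -(v y j) := by
    intro j; funext y; simp
  funext j
  fin_cases j <;> simp [curl, hc, pd_neg] <;> ring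

lemma div3_comb {v w : V3 → V3} (hv : ContDiff ℝ 3 v) (hw : ContDiff ℝ 3 w)
    (p q : ℝ) (x : V3) :
    div3 (fun y => p • v y + q • w y) x = p * div3 v x + q * div3 w x := by
  have hv' : ∀ (j : Fin 3) (y : V3), DifferentiableAt ℝ (fun z => v z j) y :=
    fun j y => ((comp_contDiff hv j).differentiable (by norm_num)) y
  have hw' : ∀ (j : Fin 3) (y : V3), DifferentiableAt ℝ (fun z => w z j) y :=
    fun j y => ((comp_contDiff hw j).differentiable (by norm_num)) y
  have hc : ∀ (j : Fin 3),
      (fun y => (p • v y + q • w y) j) = fun y => p * v y j + q * w y j := by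
    intro j; funext y; simp
  simp only [div3, Fin.isValue, hc, pd_comb _ p q (hv' _ _) (hw' _ _)]; ring

lemma lap_eq_neg_curl_curl {v : V3 → V3} (hv : ContDiff ℝ 3 v)
    (hdiv : ∀ y, div3 v y = 0) (x : V3) :
    lap v x = -(curl (curl v) x) := by
  have hpdC : ∀ (i j : Fin 3), ContDiff ℝ 2 (pd i (fun z => v z j)) :=
    fun i j => contDiff_pd (comp_contDiff hv j) i
  have hpdD : ∀ (i j : Fin 3) (y : V3), DifferentiableAt ℝ (pd i (fun z => v z j)) y :=
    fun i j y => ((hpdC i j).differentiable (by norm_num)) y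
  have hdiv' : ∀ (k : Fin 3),
      pd k (pd 0 (fun z => v z 0)) x + pd k (pd 1 (fun z => v z 1)) x
        + pd k (pd 2 (fun z => v z 2)) x = 0 := by
    intro k
    have h0 : (fun y => pd 0 (fun z => v z 0) y + pd 1 (fun z => v z 1) y
        + pd 2 (fun z => v z 2) y) = fun _ => (0:ℝ) := by
      funext y; exact hdiv y
    have h1 : pd k (fun y => (pd 0 (fun z => v z 0) y + pd 1 (fun z => v z 1) y)
        + pd 2 (fun z => v z 2) y) x = 0 := by
      rw [show (fun y => (pd 0 (fun z => v z 0) y + pd 1 (fun z => v z 1) y)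
        + pd 2 (fun z => v z 2) y) = fun _ => (0:ℝ) from h0, pd_const]
    rw [pd_add k (((hpdD 0 0 x).fun_add (hpdD 1 1 x))) (hpdD 2 2 x),
      pd_add k (hpdD 0 0 x) (hpdD 1 1 x)] at h1
    linarith [h1]
  have hc0 : (fun y => curl v y 0) = fun y => pd 1 (fun z => v z 2) y - pd 2 (fun z => v z 1) y := by
    funext y; simp [curl]
  have hc1 : (fun y => curl v y 1) = fun y => pd 2 (fun z => v z 0) y - pd 0 (fun z => v z 2) y := by
    funext y; simp [curl]
  have hc2 : (fun y => curl v y 2) = fun y => pd 0 (fun z => v z 1) y - pd 1 (fun z => v z 0) y := by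
    funext y; simp [curl]
  have hC2 : ∀ j : Fin 3, ContDiff ℝ 2 (fun z => v z j) :=
    fun j => (comp_contDiff hv j).of_le (by norm_num)
  funext j
  fin_cases j
  · simp [lap, Fin.sum_univ_three, curl, hc0, hc1, hc2,
      pd_sub _ (hpdD _ _ _) (hpdD _ _ _)]
    linarith [hdiv' 0, pd_pd_symm (hC2 1) 1 0 x, pd_pd_symm (hC2 2) 2 0 x]
  · simp [lap, Fin.sum_univ_three, curl, hc0, hc1, hc2,
      pd_sub _ (hpdD _ _ _) (hpdD _ _ _)]
    linarith [hdiv' 1, pd_pd_symm (hC2 0) 0 1 x, pd_pd_symm (hC2 2) 2 1 x]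
  · simp [lap, Fin.sum_univ_three, curl, hc0, hc1, hc2,
      pd_sub _ (hpdD _ _ _) (hpdD _ _ _)]
    linarith [hdiv' 2, pd_pd_symm (hC2 0) 0 2 x, pd_pd_symm (hC2 1) 1 2 x]

lemma cross_comb (a b : V3) (p q r s : ℝ) :
    cross (fun j => p * a j + q * b j) (fun j => r * a j + s * b j)
      = (p * s - q * r) • cross a b := by
  funext j; fin_cases j <;> simp [cross] <;> ring

set_option maxHeartbeats 2000000 in
/-- Theorem 2.4 (2): the repeated-root time-dependent double Beltrami
states solve viscous resistive Hall MHD with `ν = η` and constant pressure. -/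
theorem exact_double_beltrami_solution_repeated
    (ν : ℝ) (hν : 0 < ν) (α β : ℝ) (hαβ : (α - β) ^ 2 = 4)
    (lam : ℝ) (hlam : lam = (α + β) / 2)
    (u0 B0 : V3 → V3)
    (hu0 : ContDiff ℝ 3 u0) (hB0 : ContDiff ℝ 3 B0)
    (hdivu0 : ∀ x, div3 u0 x = 0) (hdivB0 : ∀ x, div3 B0 x = 0)
    (h1 : ∀ x, B0 x + curl u0 x = α • u0 x)
    (h2 : ∀ x, u0 x - curl B0 x = -β • B0 x)
    (u B : ℝ → V3 → V3)
    (hudef : ∀ t x, u t x = Real.exp (-ν * lam ^ 2 * t) • u0 x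
        - (2 * ν * lam * t * Real.exp (-ν * lam ^ 2 * t)) • (curl u0 x - lam • u0 x))
    (hBdef : ∀ t x, B t x = Real.exp (-ν * lam ^ 2 * t) • B0 x
        - (2 * ν * lam * t * Real.exp (-ν * lam ^ 2 * t)) • (curl B0 x - lam • B0 x)) :
    (∀ t : ℝ, 0 ≤ t → ∀ x,
      dt u t x + cross (curl (u t) x) (u t x) - ν • lap (u t) x
        = cross (curl (B t) x) (B t x)) ∧
    (∀ t : ℝ, 0 ≤ t → ∀ x,
      dt B t x + curl (fun y => cross (B t y) (u t y)) x
        + curl (fun y => cross (curl (B t) y) (B t y)) x - ν • lap (B t) x = 0) ∧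
    (∀ t : ℝ, 0 ≤ t → ∀ x, div3 (u t) x = 0) ∧
    (∀ t : ℝ, 0 ≤ t → ∀ x, div3 (B t) x = 0) := by
  -- case analysis on the repeated-root condition
  have hcase : (α = lam + 1 ∧ β = lam - 1) ∨ (α = lam - 1 ∧ β = lam + 1) := by
    have h4 : (α - β - 2) * (α - β + 2) = 0 := by linear_combination hαβ
    rcases mul_eq_zero.1 h4 with h | h
    · left; constructor <;> (rw [hlam]; linarith)
    · right; constructor <;> (rw [hlam]; linarith)
  -- rearranged Beltrami relations
  have hcu0 : ∀ x, curl u0 x = α • u0 x - B0 x := fun x => eq_sub_of_add_eq' (h1 x)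
  have hcB0 : ∀ x, curl B0 x = u0 x + β • B0 x := by
    intro x; funext j
    have h := congrFun (h2 x) j
    simp only [Pi.sub_apply, Pi.add_apply, Pi.smul_apply, Pi.neg_apply, smul_eq_mul,
      neg_smul, neg_mul] at h ⊢
    linarith
  -- combo calculus
  have hcomb3 : ∀ p q : ℝ, ContDiff ℝ 3 (fun y => p • u0 y + q • B0 y) :=
    fun p q => (hu0.const_smul p).add (hB0.const_smul q)
  have hcurlC : ∀ (p q : ℝ) (x : V3),
      curl (fun y => p • u0 y + q • B0 y) x
        = (p * α + q) • u0 x + (q * β - p) • B0 x := by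
    intro p q x
    rw [curl_comb hu0 hB0 p q x, hcu0 x, hcB0 x]
    funext j
    simp only [Pi.add_apply, Pi.sub_apply, Pi.smul_apply, smul_eq_mul]
    ring
  have hdivC : ∀ (p q : ℝ) (x : V3), div3 (fun y => p • u0 y + q • B0 y) x = 0 := by
    intro p q x
    rw [div3_comb hu0 hB0 p q x, hdivu0 x, hdivB0 x]; ring
  have hlapC : ∀ (p q : ℝ) (x : V3),
      lap (fun y => p • u0 y + q • B0 y) x
        = (-((p * α + q) * α + (q * β - p))) • u0 x
          + (-((q * β - p) * β - (p * α + q))) • B0 x := by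
    intro p q x
    rw [lap_eq_neg_curl_curl (hcomb3 p q) (hdivC p q) x]
    have hfe : curl (fun y => p • u0 y + q • B0 y)
        = fun y => (p * α + q) • u0 y + (q * β - p) • B0 y := funext (hcurlC p q)
    rw [hfe, hcurlC]
    funext j
    simp only [Pi.add_apply, Pi.smul_apply, Pi.neg_apply, smul_eq_mul]
    ring
  have hcrossC : ∀ (p q r s : ℝ) (x : V3),
      cross (p • u0 x + q • B0 x) (r • u0 x + s • B0 x)
        = (p * s - q * r) • cross (u0 x) (B0 x) := by
    intro p q r s x
    have e1 : p • u0 x + q • B0 x = fun j => p * u0 x j + q * B0 x j := by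
      funext j; simp
    have e2 : r • u0 x + s • B0 x = fun j => r * u0 x j + s * B0 x j := by
      funext j; simp
    rw [e1, e2, cross_comb]
  -- the fields as combinations of u0 and B0
  have hueq : ∀ t : ℝ, u t = fun y =>
      (Real.exp (-ν * lam ^ 2 * t) - (2 * ν * lam * t * Real.exp (-ν * lam ^ 2 * t)) * α
        + (2 * ν * lam * t * Real.exp (-ν * lam ^ 2 * t)) * lam) • u0 y
      + (2 * ν * lam * t * Real.exp (-ν * lam ^ 2 * t)) • B0 y := by
    intro t; funext y
    rw [hudef t y, hcu0 y]
    funext j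
    simp only [Pi.add_apply, Pi.sub_apply, Pi.smul_apply, smul_eq_mul]
    ring
  have hBeq : ∀ t : ℝ, B t = fun y =>
      (-(2 * ν * lam * t * Real.exp (-ν * lam ^ 2 * t))) • u0 y
      + (Real.exp (-ν * lam ^ 2 * t) - (2 * ν * lam * t * Real.exp (-ν * lam ^ 2 * t)) * β
        + (2 * ν * lam * t * Real.exp (-ν * lam ^ 2 * t)) * lam) • B0 y := by
    intro t; funext y
    rw [hBdef t y, hcB0 y]
    funext j
    simp only [Pi.add_apply, Pi.sub_apply, Pi.smul_apply, smul_eq_mul, neg_mul]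
    ring
  -- time derivatives
  have hE : ∀ t : ℝ, HasDerivAt (fun s : ℝ => Real.exp (-ν * lam ^ 2 * s))
      (-ν * lam ^ 2 * Real.exp (-ν * lam ^ 2 * t)) t := by
    intro t
    have h1 : HasDerivAt (fun s : ℝ => -ν * lam ^ 2 * s) (-ν * lam ^ 2) t := by
      have h := (hasDerivAt_id t).const_mul (-ν * lam ^ 2)
      rw [mul_one] at h; exact h
    have h2 := (Real.hasDerivAt_exp (-ν * lam ^ 2 * t)).comp t h1
    have h3 : Real.exp ∘ (fun s : ℝ => -ν * lam ^ 2 * s)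
        = fun s : ℝ => Real.exp (-ν * lam ^ 2 * s) := rfl
    rw [h3] at h2
    exact h2.congr_deriv (by ring)
  have hL : ∀ t : ℝ, HasDerivAt (fun s : ℝ => 2 * ν * lam * s) (2 * ν * lam) t := by
    intro t
    have h := (hasDerivAt_id t).const_mul (2 * ν * lam)
    rw [mul_one] at h; exact h
  have hP : ∀ t : ℝ, HasDerivAt (fun s : ℝ => 2 * ν * lam * s * Real.exp (-ν * lam ^ 2 * s))
      (2 * ν * lam * Real.exp (-ν * lam ^ 2 * t)
        + 2 * ν * lam * t * (-ν * lam ^ 2 * Real.exp (-ν * lam ^ 2 * t))) t :=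
    fun t => (hL t).mul (hE t)
  have hdtu : ∀ (t : ℝ) (x : V3), dt u t x =
      (-ν * lam ^ 2 * Real.exp (-ν * lam ^ 2 * t)) • u0 x
        - (2 * ν * lam * Real.exp (-ν * lam ^ 2 * t)
            + 2 * ν * lam * t * (-ν * lam ^ 2 * Real.exp (-ν * lam ^ 2 * t)))
          • (curl u0 x - lam • u0 x) := by
    intro t x
    funext j
    have hfun : (fun s => u s x j) = fun s =>
        Real.exp (-ν * lam ^ 2 * s) * (u0 x j)
          - 2 * ν * lam * s * Real.exp (-ν * lam ^ 2 * s) * ((curl u0 x - lam • u0 x) j) := by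
      funext s; rw [hudef s x]
      simp only [Pi.sub_apply, Pi.smul_apply, smul_eq_mul]
    show deriv (fun s => u s x j) t = _
    rw [hfun, (((hE t).mul_const (u0 x j)).fun_sub ((hP t).mul_const ((curl u0 x - lam • u0 x) j))).deriv]
    simp only [Pi.sub_apply, Pi.smul_apply, smul_eq_mul]
  have hdtB : ∀ (t : ℝ) (x : V3), dt B t x =
      (-ν * lam ^ 2 * Real.exp (-ν * lam ^ 2 * t)) • B0 x
        - (2 * ν * lam * Real.exp (-ν * lam ^ 2 * t)
            + 2 * ν * lam * t * (-ν * lam ^ 2 * Real.exp (-ν * lam ^ 2 * t)))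
          • (curl B0 x - lam • B0 x) := by
    intro t x
    funext j
    have hfun : (fun s => B s x j) = fun s =>
        Real.exp (-ν * lam ^ 2 * s) * (B0 x j)
          - 2 * ν * lam * s * Real.exp (-ν * lam ^ 2 * s) * ((curl B0 x - lam • B0 x) j) := by
      funext s; rw [hBdef s x]
      simp only [Pi.sub_apply, Pi.smul_apply, smul_eq_mul]
    show deriv (fun s => B s x j) t = _
    rw [hfun, (((hE t).mul_const (B0 x j)).fun_sub ((hP t).mul_const ((curl B0 x - lam • B0 x) j))).deriv]
    simp only [Pi.sub_apply, Pi.smul_apply, smul_eq_mul]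
  refine ⟨?_, ?_, ?_, ?_⟩
  · -- first equation
    intro t _ x
    rw [hdtu t x, hcu0 x, hueq t, hBeq t, hcurlC, hcurlC, hlapC]
    rw [hcrossC, hcrossC]
    funext j
    simp only [Pi.add_apply, Pi.sub_apply, Pi.smul_apply, Pi.neg_apply, smul_eq_mul]
    rcases hcase with ⟨hA, hB'⟩ | ⟨hA, hB'⟩ <;> rw [hA, hB'] <;> ring
  · -- second equation
    intro t _ x
    have hfg : (fun y => cross (B t y) (u t y))
        = fun y => -(cross (curl (B t) y) (B t y)) := by
      funext y
      rw [hBeq t, hueq t]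
      rw [hcurlC]
      rw [hcrossC, hcrossC]
      funext j
      simp only [Pi.smul_apply, Pi.neg_apply, smul_eq_mul]
      rcases hcase with ⟨hA, hB'⟩ | ⟨hA, hB'⟩ <;> rw [hA, hB'] <;> ring
    rw [hfg, curl_neg (fun y => cross (curl (B t) y) (B t y)) x]
    rw [hdtB t x, hcB0 x, hBeq t, hlapC]
    funext j
    simp only [Pi.add_apply, Pi.sub_apply, Pi.smul_apply, Pi.neg_apply, smul_eq_mul,
      Pi.zero_apply]
    rcases hcase with ⟨hA, hB'⟩ | ⟨hA, hB'⟩ <;> rw [hA, hB'] <;> ring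
  · intro t _ x
    rw [hueq t]; exact hdivC _ _ x
  · intro t _ x
    rw [hBeq t]; exact hdivC _ _ x
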